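/- arXiv:2301.05602 — 2 statements merged into one kernel-verified Lean document; each statement's English description precedes it below -/
import Mathlib

section
/- Let α₁, ν₁, ξ₁, α₂, ν₂, ξ₂, ω₁, ω₂ be positive reals, let η > 1 and τ > 0 with τ η > 1, and define φ̃_HM(h) = ω₁ ∫₀^{ξ₁} (τ exp(−u η h²) − exp(−u h²)) g_M(u; α₁, ν₁) du + ω₂ ∫_{ξ₂}^∞ exp(−u h²) g_M(u; α₂, ν₂) du for h ≥ 0, where g_M(u; α, ν) = (1/Γ(ν)) (1/(2α))^{2ν} u^{−ν−1} exp(−1/(4 u α²)). Then for every h ≥ 0, φ̃_HM(h) ≥ ω₁ · (τ η)^{−1/(η−1)} · ((1 − η)/η) · ∫₀^{ξ₁} g_M(u; α₁, ν₁) du. -/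
/-!
With `t = exp (-u h²)` the hole-effect kernel is `τ t^η - t`, and Young's inequality with
exponents `η` and `η / (η - 1)`, applied to `t = ((τη)^{1/η} t) · (τη)^{-1/η}`, bounds it below by
`(τη)^{-1/(η-1)} (1 - η) / η` for every `t ≥ 0`. Integrating this bound against the nonnegative
density `g_M`, which is integrable on `[0, ξ₁]` because `exp (-1 / (4uα²))` beats every power of
`u` as `u → 0`, gives the first term; the Matérn part is a nonnegative integral.
-/

open MeasureTheory Real Set

open scoped Nat

/-- The mixing density `g_M(u; α, ν)`. -/
noncomputable def maternMixing (α ν u : ℝ) : ℝ :=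
  1 / Gamma ν * (1 / (2 * α)) ^ (2 * ν) * u ^ (-ν - 1) * exp (-1 / (4 * u * α ^ 2))

theorem maternMixing_nonneg {α ν u : ℝ} (hα : 0 ≤ α) (hν : 0 ≤ ν) (hu : 0 ≤ u) :
    0 ≤ maternMixing α ν u := by
  have := Gamma_nonneg_of_nonneg hν
  unfold maternMixing
  positivity

theorem exp_neg_one_div_le_factorial_mul_pow {y : ℝ} (hy : 0 < y) (n : ℕ) :
    exp (-1 / y) ≤ n ! * y ^ n := by
  have hexp : (1 / y) ^ n / n ! ≤ exp (1 / y) := pow_div_factorial_le_exp _ (by positivity) n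
  rw [neg_div, exp_neg]
  calc (exp (1 / y))⁻¹ ≤ ((1 / y) ^ n / n !)⁻¹ := inv_anti₀ (by positivity) hexp
    _ = n ! * y ^ n := by rw [div_pow, one_pow]; field_simp

theorem rpow_neg_mul_exp_neg_one_div_le {s c u ξ : ℝ} {n : ℕ} (hsn : s ≤ n) (hc : 0 < c)
    (hu : 0 < u) (huξ : u ≤ ξ) :
    u ^ (-s) * exp (-1 / (c * u)) ≤ n ! * c ^ n * ξ ^ (n - s) :=
  calc u ^ (-s) * exp (-1 / (c * u))
      ≤ u ^ (-s) * (n ! * (c * u) ^ n) := by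
        gcongr
        exact exp_neg_one_div_le_factorial_mul_pow (by positivity) n
    _ = n ! * c ^ n * (u ^ (-s) * u ^ (n : ℝ)) := by rw [rpow_natCast]; ring
    _ = n ! * c ^ n * u ^ (n - s) := by rw [← rpow_add hu, neg_add_eq_sub]
    _ ≤ n ! * c ^ n * ξ ^ (n - s) := by gcongr

theorem intervalIntegrable_maternMixing {α : ℝ} (hα : α ≠ 0) (ν : ℝ) {ξ : ℝ} (hξ : 0 ≤ ξ) :
    IntervalIntegrable (maternMixing α ν) volume 0 ξ := by
  set K := 1 / Gamma ν * (1 / (2 * α)) ^ (2 * ν)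
  set n := ⌈ν + 1⌉₊
  obtain ⟨C, hC⟩ : ∃ C, ∀ u ∈ Ioc 0 ξ, ‖maternMixing α ν u‖ ≤ C := by
    refine ⟨|K| * (n ! * (4 * α ^ 2) ^ n * ξ ^ (n - (ν + 1))), ?_⟩
    rintro u ⟨hu, huξ⟩
    have hsplit : maternMixing α ν u = K * (u ^ (-(ν + 1)) * exp (-1 / (4 * α ^ 2 * u))) := by
      rw [neg_add', show 4 * α ^ 2 * u = 4 * u * α ^ 2 by ring]
      simp only [maternMixing, K]
      ring
    rw [hsplit, norm_mul, norm_eq_abs, norm_of_nonneg (by positivity)]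
    exact mul_le_mul_of_nonneg_left
      (rpow_neg_mul_exp_neg_one_div_le (Nat.le_ceil _) (by positivity) hu huξ) (abs_nonneg K)
  refine (intervalIntegrable_const (c := C)).mono_fun' ?_ ?_
  · unfold maternMixing
    fun_prop
  rw [uIoc_of_le hξ]
  exact (ae_restrict_iff' measurableSet_Ioc).2 (.of_forall hC)

theorem le_mul_rpow_sub_self {τ η t : ℝ} (hτ : 0 < τ) (hη : 1 < η) (ht : 0 ≤ t) :
    (τ * η) ^ (-(1 / (η - 1))) * ((1 - η) / η) ≤ τ * t ^ η - t := by
  have hη₀ : 0 < η := one_pos.trans hη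
  have hτη : 0 < τ * η := mul_pos hτ hη₀
  have hyoung := young_inequality_of_nonneg (by positivity : 0 ≤ (τ * η) ^ η⁻¹ * t)
    (rpow_nonneg hτη.le (-η⁻¹)) (HolderConjugate.conjExponent hη)
  have hprod : (τ * η) ^ η⁻¹ * t * (τ * η) ^ (-η⁻¹) = t := by
    rw [mul_right_comm, ← rpow_add hτη, add_neg_cancel, rpow_zero, one_mul]
  have hfirst : ((τ * η) ^ η⁻¹ * t) ^ η / η = τ * t ^ η := by
    rw [mul_rpow (by positivity) ht, ← rpow_mul hτη.le, inv_mul_cancel₀ hη₀.ne', rpow_one]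
    field_simp
  have hsecond : ((τ * η) ^ (-η⁻¹)) ^ η.conjExponent / η.conjExponent =
      -((τ * η) ^ (-(1 / (η - 1))) * ((1 - η) / η)) := by
    rw [← rpow_mul hτη.le, conjExponent, show -η⁻¹ * (η / (η - 1)) = -(1 / (η - 1)) by field_simp]
    field_simp
    ring
  linarith

theorem const_mul_intervalIntegral_le_integral_mul {f g : ℝ → ℝ} {a b c : ℝ} (hab : a ≤ b)
    (hg : IntervalIntegrable g volume a b) (hf : Continuous f)
    (hcf : ∀ x ∈ Icc a b, c ≤ f x) (hg₀ : ∀ x ∈ Icc a b, 0 ≤ g x) :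
    c * ∫ x in a..b, g x ≤ ∫ x in a..b, f x * g x := by
  rw [← intervalIntegral.integral_const_mul]
  exact intervalIntegral.integral_mono_on hab (hg.const_mul c)
    (hg.continuousOn_mul hf.continuousOn)
    fun x hx => mul_le_mul_of_nonneg_right (hcf x hx) (hg₀ x hx)

theorem hybrid_hole_effect_matern_lower_bound_general
    (α₁ ν₁ ξ₁ α₂ ν₂ ξ₂ ω₁ ω₂ τ η : ℝ)
    (hα₁ : 0 < α₁) (hν₁ : 0 < ν₁) (hξ₁ : 0 < ξ₁)
    (hα₂ : 0 < α₂) (hν₂ : 0 < ν₂) (hξ₂ : 0 < ξ₂)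
    (hω₁ : 0 < ω₁) (hω₂ : 0 < ω₂) (hτ : 0 < τ)
    (hη : 1 < η) :
    ∀ h : ℝ, 0 ≤ h →
      ω₁ * ((τ * η) ^ (-(1 / (η - 1))) * ((1 - η) / η)) *
          (∫ u in (0 : ℝ)..ξ₁,
            (1 / Real.Gamma ν₁) * (1 / (2 * α₁)) ^ (2 * ν₁) *
              u ^ (-ν₁ - 1) * Real.exp (-1 / (4 * u * α₁ ^ 2))) ≤
        ω₁ * (∫ u in (0 : ℝ)..ξ₁,
            (τ * Real.exp (-u * η * h ^ 2) - Real.exp (-u * h ^ 2)) *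
            ((1 / Real.Gamma ν₁) * (1 / (2 * α₁)) ^ (2 * ν₁) *
              u ^ (-ν₁ - 1) * Real.exp (-1 / (4 * u * α₁ ^ 2)))) +
          ω₂ * ∫ u in Ioi ξ₂,
            Real.exp (-u * h ^ 2) *
            ((1 / Real.Gamma ν₂) * (1 / (2 * α₂)) ^ (2 * ν₂) *
              u ^ (-ν₂ - 1) * Real.exp (-1 / (4 * u * α₂ ^ 2))) := by
  intro h _
  have hkernel : ∀ u, (τ * η) ^ (-(1 / (η - 1))) * ((1 - η) / η) ≤
      τ * exp (-u * η * h ^ 2) - exp (-u * h ^ 2) := fun u => by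
    rw [show -u * η * h ^ 2 = -u * h ^ 2 * η by ring, exp_mul]
    exact le_mul_rpow_sub_self hτ hη (exp_nonneg _)
  have hfirst := const_mul_intervalIntegral_le_integral_mul hξ₁.le
    (intervalIntegrable_maternMixing hα₁.ne' ν₁ hξ₁.le) (by fun_prop) (fun u _ => hkernel u)
    fun u hu => maternMixing_nonneg hα₁.le hν₁.le hu.1
  have hsecond : 0 ≤ ∫ u in Ioi ξ₂, exp (-u * h ^ 2) * maternMixing α₂ ν₂ u :=
    setIntegral_nonneg measurableSet_Ioi fun u hu =>
      mul_nonneg (exp_nonneg _) (maternMixing_nonneg hα₂.le hν₂.le (hξ₂.trans hu).le)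
  rw [mul_assoc]
  exact le_add_of_le_of_nonneg (mul_le_mul_of_nonneg_left hfirst hω₁.le)
    (mul_nonneg hω₂.le hsecond)

/-- Lower bound for the hybrid Hole-Effect–Matérn covariance function. -/
theorem hybrid_hole_effect_matern_lower_bound
    (α₁ ν₁ ξ₁ α₂ ν₂ ξ₂ ω₁ ω₂ τ η : ℝ)
    (hα₁ : 0 < α₁) (hν₁ : 0 < ν₁) (hξ₁ : 0 < ξ₁)
    (hα₂ : 0 < α₂) (hν₂ : 0 < ν₂) (hξ₂ : 0 < ξ₂)
    (hω₁ : 0 < ω₁) (hω₂ : 0 < ω₂) (hτ : 0 < τ)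
    (hη : 1 < η) (hτη : 1 < τ * η) :
    ∀ h : ℝ, 0 ≤ h →
      ω₁ * ((τ * η) ^ (-(1 / (η - 1))) * ((1 - η) / η)) *
          (∫ u in (0 : ℝ)..ξ₁,
            (1 / Real.Gamma ν₁) * (1 / (2 * α₁)) ^ (2 * ν₁) *
              u ^ (-ν₁ - 1) * Real.exp (-1 / (4 * u * α₁ ^ 2))) ≤
        ω₁ * (∫ u in (0 : ℝ)..ξ₁,
            (τ * Real.exp (-u * η * h ^ 2) - Real.exp (-u * h ^ 2)) *
            ((1 / Real.Gamma ν₁) * (1 / (2 * α₁)) ^ (2 * ν₁) *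
              u ^ (-ν₁ - 1) * Real.exp (-1 / (4 * u * α₁ ^ 2)))) +
          ω₂ * ∫ u in Ioi ξ₂,
            Real.exp (-u * h ^ 2) *
            ((1 / Real.Gamma ν₂) * (1 / (2 * α₂)) ^ (2 * ν₂) *
              u ^ (-ν₂ - 1) * Real.exp (-1 / (4 * u * α₂ ^ 2))) :=
  hybrid_hole_effect_matern_lower_bound_general α₁ ν₁ ξ₁ α₂ ν₂ ξ₂ ω₁ ω₂ τ η hα₁ hν₁ hξ₁ hα₂ hν₂ hξ₂
    hω₁ hω₂ hτ hη
end

section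
/- Let α₁, ν₁, ξ₁, α₂, ν₂, ξ₂, ω₁, ω₂ be positive reals and let κ ≥ 0 be a real number. Then the quantity ω₁ ∫₀^{ξ₁} u^{κ} · (1/Γ(ν₁)) (1/(2α₁))^{2ν₁} u^{−ν₁−1} exp(−1/(4 u α₁²)) du + ω₂ ∫_{ξ₂}^∞ u^{κ} · (1/Γ(ν₂)) (1/(2α₂))^{2ν₂} u^{−ν₂−1} exp(−1/(4 u α₂²)) du is finite if and only if κ < ν₂. -/
open MeasureTheory Real Set

/-!
Near `0` the factor `exp (-1 / (4 u α₁²))` vanishes faster than any power of `u`, since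
`exp (-x) ≤ n! / xⁿ`; hence the integral over `(0, ξ₁)` is finite for every `κ`. On `(ξ₂, ∞)` the
same factor lies between `exp (-1 / (4 ξ₂ α₂²)) > 0` and `1`, so the second integral is comparable
to `∫_{ξ₂}^∞ u^(κ - ν₂ - 1) du`, which is finite exactly when `κ < ν₂`.
-/

noncomputable def invGammaMixing (α ν u : ℝ) : ℝ :=
  (1 / Real.Gamma ν) * (1 / (2 * α)) ^ (2 * ν) * u ^ (-ν - 1) * Real.exp (-1 / (4 * u * α ^ 2))

lemma ENNReal.ofReal_mul_lt_top_iff {a : ℝ} (ha : 0 < a) {b : ENNReal} :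
    ENNReal.ofReal a * b < ⊤ ↔ b < ⊤ := by
  rw [ENNReal.mul_lt_top_iff]
  simp only [ENNReal.ofReal_lt_top, true_and, ENNReal.ofReal_eq_zero, ha.not_ge, false_or]
  exact or_iff_left_of_imp fun hb => hb ▸ ENNReal.zero_lt_top

lemma Real.exp_neg_le_factorial_div_pow {x : ℝ} (hx : 0 < x) (n : ℕ) :
    exp (-x) ≤ n.factorial / x ^ n := by
  rw [exp_neg, ← inv_div]
  exact inv_anti₀ (by positivity) (pow_div_factorial_le_exp x hx.le n)

lemma setLIntegral_Ioo_rpow_mul_exp_neg_div_lt_top {c : ℝ} (hc : 0 < c) (p ξ : ℝ) :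
    ∫⁻ u in Ioo 0 ξ, ENNReal.ofReal (u ^ p * exp (-c / u)) < ⊤ := by
  obtain ⟨n, hn⟩ := exists_nat_ge (-p)
  have hbound : ∀ u ∈ Ioo 0 ξ, u ^ p * exp (-c / u) ≤ n.factorial / c ^ n * ξ ^ (p + n) := by
    rintro u ⟨hu, huξ⟩
    calc u ^ p * exp (-c / u) ≤ u ^ p * (n.factorial / (c / u) ^ n) := by
          rw [neg_div]; gcongr; exact exp_neg_le_factorial_div_pow (by positivity) n
      _ = n.factorial / c ^ n * u ^ (p + n) := by
          rw [rpow_add hu, rpow_natCast, div_pow]; field_simp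
      _ ≤ n.factorial / c ^ n * ξ ^ (p + n) := by
          gcongr; linarith
  exact setLIntegral_lt_top_of_le_nnreal (by simp)
    ⟨_, fun u hu => ENNReal.ofReal_le_ofReal (hbound u hu)⟩

lemma setLIntegral_Ioi_rpow_lt_top_iff {ξ : ℝ} (hξ : 0 < ξ) (p : ℝ) :
    ∫⁻ u in Ioi ξ, ENNReal.ofReal (u ^ p) < ⊤ ↔ p < -1 := by
  have hpos : ∀ u ∈ Ioi ξ, 0 ≤ u ^ p := fun u hu => rpow_nonneg (hξ.trans hu).le p
  rw [lt_top_iff_ne_top, lintegral_ofReal_ne_top_iff_integrable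
    (by fun_prop : Measurable fun u : ℝ => u ^ p).aestronglyMeasurable
    ((ae_restrict_iff' measurableSet_Ioi).2 (ae_of_all _ hpos))]
  exact integrableOn_Ioi_rpow_iff hξ

lemma setLIntegral_Ioi_rpow_mul_exp_neg_div_lt_top_iff {ξ c : ℝ} (hξ : 0 < ξ) (hc : 0 ≤ c)
    (p : ℝ) : ∫⁻ u in Ioi ξ, ENNReal.ofReal (u ^ p * exp (-c / u)) < ⊤ ↔ p < -1 := by
  rw [← setLIntegral_Ioi_rpow_lt_top_iff hξ p]
  have hupper : ∫⁻ u in Ioi ξ, ENNReal.ofReal (u ^ p * exp (-c / u))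
      ≤ ∫⁻ u in Ioi ξ, ENNReal.ofReal (u ^ p) := by
    refine setLIntegral_mono' measurableSet_Ioi fun u hu => ENNReal.ofReal_le_ofReal ?_
    have hu : 0 < u := hξ.trans hu
    exact mul_le_of_le_one_right (rpow_nonneg hu.le p) (exp_le_one_iff.2 (by
      rw [neg_div]; exact neg_nonpos.2 (by positivity)))
  have hlower : ENNReal.ofReal (exp (-c / ξ)) * ∫⁻ u in Ioi ξ, ENNReal.ofReal (u ^ p)
      ≤ ∫⁻ u in Ioi ξ, ENNReal.ofReal (u ^ p * exp (-c / u)) := by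
    rw [← lintegral_const_mul' _ _ ENNReal.ofReal_ne_top]
    refine setLIntegral_mono' measurableSet_Ioi fun u hu => ?_
    rw [← ENNReal.ofReal_mul (exp_pos _).le, mul_comm]
    have hexp : exp (-c / ξ) ≤ exp (-c / u) := exp_le_exp.2 <| by
      rw [neg_div, neg_div, neg_le_neg_iff]; exact div_le_div_of_nonneg_left hc hξ hu.le
    exact ENNReal.ofReal_le_ofReal (mul_le_mul_of_nonneg_left hexp (rpow_nonneg (hξ.trans hu).le p))
  exact ⟨fun h => (ENNReal.ofReal_mul_lt_top_iff (exp_pos _)).1 (hlower.trans_lt h),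
    hupper.trans_lt⟩

lemma rpow_mul_invGammaMixing {u : ℝ} (hu : 0 < u) (α ν κ : ℝ) :
    u ^ κ * invGammaMixing α ν u =
      1 / Gamma ν * (1 / (2 * α)) ^ (2 * ν) * (u ^ (κ - ν - 1) * exp (-(1 / (4 * α ^ 2)) / u)) := by
  have hpow : u ^ (κ - ν - 1) = u ^ κ * u ^ (-ν - 1) := by
    rw [← rpow_add hu]; ring_nf
  have hexp : -1 / (4 * u * α ^ 2) = -(1 / (4 * α ^ 2)) / u := by
    rw [neg_div, neg_div, div_div, mul_right_comm 4 u]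
  rw [invGammaMixing, hpow, hexp]
  ring

lemma setLIntegral_rpow_mul_invGammaMixing {s : Set ℝ} (hs : MeasurableSet s) (hs0 : s ⊆ Ioi 0)
    (α ν κ : ℝ) :
    ∫⁻ u in s, ENNReal.ofReal (u ^ κ * invGammaMixing α ν u) =
      ENNReal.ofReal (1 / Gamma ν * (1 / (2 * α)) ^ (2 * ν)) *
        ∫⁻ u in s, ENNReal.ofReal (u ^ (κ - ν - 1) * exp (-(1 / (4 * α ^ 2)) / u)) := by
  rw [← lintegral_const_mul' _ _ ENNReal.ofReal_ne_top]
  refine setLIntegral_congr_fun hs fun u hu => ?_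
  have hu : 0 < u := hs0 hu
  rw [rpow_mul_invGammaMixing hu,
    ENNReal.ofReal_mul' (mul_nonneg (rpow_nonneg hu.le _) (exp_pos _).le)]

theorem hybrid_hole_effect_matern_moment_finite_iff_general
    (α₁ ν₁ ξ₁ α₂ ν₂ ξ₂ ω₁ ω₂ κ : ℝ)
    (hα₁ : 0 < α₁)
    (hα₂ : 0 < α₂) (hν₂ : 0 < ν₂) (hξ₂ : 0 < ξ₂)
    (hω₂ : 0 < ω₂) :
    (ENNReal.ofReal ω₁ *
        (∫⁻ u in Ioo (0 : ℝ) ξ₁,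
          ENNReal.ofReal (u ^ κ * ((1 / Real.Gamma ν₁) * (1 / (2 * α₁)) ^ (2 * ν₁) *
            u ^ (-ν₁ - 1) * Real.exp (-1 / (4 * u * α₁ ^ 2))))) +
      ENNReal.ofReal ω₂ *
        (∫⁻ u in Ioi ξ₂,
          ENNReal.ofReal (u ^ κ * ((1 / Real.Gamma ν₂) * (1 / (2 * α₂)) ^ (2 * ν₂) *
            u ^ (-ν₂ - 1) * Real.exp (-1 / (4 * u * α₂ ^ 2))))) < ⊤)
      ↔ κ < ν₂ := by
  change ENNReal.ofReal ω₁ *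
        (∫⁻ u in Ioo 0 ξ₁, ENNReal.ofReal (u ^ κ * invGammaMixing α₁ ν₁ u)) +
      ENNReal.ofReal ω₂ *
        (∫⁻ u in Ioi ξ₂, ENNReal.ofReal (u ^ κ * invGammaMixing α₂ ν₂ u)) < ⊤ ↔ κ < ν₂
  have hC₂ : 0 < 1 / Gamma ν₂ * (1 / (2 * α₂)) ^ (2 * ν₂) := by
    have := Gamma_pos_of_pos hν₂
    positivity
  rw [setLIntegral_rpow_mul_invGammaMixing measurableSet_Ioo Ioo_subset_Ioi_self,
    setLIntegral_rpow_mul_invGammaMixing measurableSet_Ioi (Ioi_subset_Ioi hξ₂.le),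
    ENNReal.add_lt_top, ENNReal.ofReal_mul_lt_top_iff hω₂, ENNReal.ofReal_mul_lt_top_iff hC₂,
    setLIntegral_Ioi_rpow_mul_exp_neg_div_lt_top_iff hξ₂ (by positivity),
    and_iff_right (ENNReal.mul_lt_top ENNReal.ofReal_lt_top (ENNReal.mul_lt_top
      ENNReal.ofReal_lt_top (setLIntegral_Ioo_rpow_mul_exp_neg_div_lt_top (by positivity) _ _)))]
  constructor <;> intro h <;> linarith

/-- The κ-th moment of the piecewise mixing function of the hybrid
Hole-Effect–Matérn model is finite if and only if `κ < ν₂`. -/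
theorem hybrid_hole_effect_matern_moment_finite_iff
    (α₁ ν₁ ξ₁ α₂ ν₂ ξ₂ ω₁ ω₂ κ : ℝ)
    (hα₁ : 0 < α₁) (hν₁ : 0 < ν₁) (hξ₁ : 0 < ξ₁)
    (hα₂ : 0 < α₂) (hν₂ : 0 < ν₂) (hξ₂ : 0 < ξ₂)
    (hω₁ : 0 < ω₁) (hω₂ : 0 < ω₂) (hκ : 0 ≤ κ) :
    (ENNReal.ofReal ω₁ *
        (∫⁻ u in Ioo (0 : ℝ) ξ₁,
          ENNReal.ofReal (u ^ κ * ((1 / Real.Gamma ν₁) * (1 / (2 * α₁)) ^ (2 * ν₁) *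
            u ^ (-ν₁ - 1) * Real.exp (-1 / (4 * u * α₁ ^ 2))))) +
      ENNReal.ofReal ω₂ *
        (∫⁻ u in Ioi ξ₂,
          ENNReal.ofReal (u ^ κ * ((1 / Real.Gamma ν₂) * (1 / (2 * α₂)) ^ (2 * ν₂) *
            u ^ (-ν₂ - 1) * Real.exp (-1 / (4 * u * α₂ ^ 2))))) < ⊤)
      ↔ κ < ν₂ :=
  hybrid_hole_effect_matern_moment_finite_iff_general α₁ ν₁ ξ₁ α₂ ν₂ ξ₂ ω₁ ω₂ κ hα₁ hα₂ hν₂ hξ₂ hω₂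
end
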